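/- arXiv:2410.15317 — 5 statements merged into one kernel-verified Lean document; each statement's English description precedes it below -/
import Mathlib

section
/- Let (E,F) be a p-energy form on (X,m) satisfying the Lipschitz contraction property, let δ, M > 0, and let u,v ∈ F be nonnegative with (u+v)(x) ≥ δ for all x in {u ≠ 0} and u ≤ M. Then there exists C = C(p,δ,M) ∈ (0,∞) such that u/(u+v) ∈ F and E(u/(u+v)) ≤ C(E(u) + E(v)), where 0/0 is interpreted as 0. -/
/-!
Write `u / (u + v) = u * h` with `h = (max (u + v) δ)⁻¹`, a `δ⁻²`-Lipschitz image of `u + v`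
bounded by `δ⁻¹` (the cut-off at `δ` is harmless since `u = 0` wherever `u + v < δ`).
Products of bounded elements of `F` are handled by polarization,
`u * h = ((u + h)² - (u - h)²) / 4`: as `|u ± h| ≤ K := M + δ⁻¹`, the squares may be replaced by
`t ↦ min |t| K ^ 2`, which is `2K`-Lipschitz, so the Lipschitz contraction property and the
triangle inequality for `E ^ (1 / p)` bound `E (u * h) ^ (1 / p)` by a multiple of
`E u ^ (1 / p) + E v ^ (1 / p)`.
-/

open MeasureTheory NNReal

theorem lipschitzWith_one_inv_smul {K : ℝ≥0} (hK : K ≠ 0) {φ : ℝ → ℝ}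
    (hφ : LipschitzWith K φ) : LipschitzWith 1 ((K : ℝ)⁻¹ • φ) := by
  have h := (lipschitzWith_smul ((K : ℝ)⁻¹)).comp hφ
  rw [nnnorm_inv, NNReal.nnnorm_eq, inv_mul_cancel₀ hK] at h
  exact h

theorem comp_eq_smul_comp {X : Type*} {K : ℝ≥0} (hK : K ≠ 0) (φ : ℝ → ℝ) (u : X → ℝ) :
    φ ∘ u = (K : ℝ) • (((K : ℝ)⁻¹ • φ) ∘ u) := by
  ext x
  simp [hK]

theorem lipschitzWith_sq_min_abs (K : ℝ≥0) : LipschitzWith (2 * K) fun t : ℝ => min |t| K ^ 2 := by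
  refine LipschitzWith.of_dist_le_mul fun s t => ?_
  have hmin : LipschitzWith 1 fun t : ℝ => min |t| K := lipschitzWith_one_norm.min_const _
  have hst : |min |s| K - min |t| K| ≤ |s - t| := by
    simpa [Real.dist_eq] using hmin.dist_le_mul s t
  have hsum : |min |s| K + min |t| K| ≤ 2 * K := by
    rw [abs_of_nonneg (by positivity)]
    linarith [min_le_right |s| (K : ℝ), min_le_right |t| (K : ℝ)]
  rw [Real.dist_eq, Real.dist_eq, sq_sub_sq, abs_mul, NNReal.coe_mul, NNReal.coe_ofNat]
  exact mul_le_mul hsum hst (abs_nonneg _) (by positivity)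

theorem mul_eq_sq_min_abs_sub {a b K : ℝ} (h : |a| + |b| ≤ K) :
    a * b = (min |a + b| K ^ 2 - min |a - b| K ^ 2) / 4 := by
  rw [min_eq_left ((abs_add_le a b).trans h), min_eq_left ((abs_sub _ _).trans h), sq_abs, sq_abs]
  ring

theorem mul_eq_smul_sub_comp {X : Type*} {u v : X → ℝ} {K : ℝ} (hK : ∀ x, |u x| + |v x| ≤ K) :
    u * v = (4 : ℝ)⁻¹ •
      ((fun t => min |t| K ^ 2) ∘ (u + v) - (fun t => min |t| K ^ 2) ∘ (u - v)) := by
  ext x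
  simp only [Pi.mul_apply, Pi.smul_apply, Pi.sub_apply, Pi.add_apply, Function.comp_apply,
    smul_eq_mul, mul_eq_sq_min_abs_sub (hK x)]
  ring

theorem lipschitzWith_inv_max {δ : ℝ≥0} (hδ : 0 < δ) :
    LipschitzWith (δ⁻¹ ^ 2) fun t : ℝ => (max t δ)⁻¹ := by
  refine LipschitzWith.of_dist_le_mul fun s t => ?_
  have hs : (δ : ℝ) ≤ max s δ := le_max_right _ _
  have ht : (δ : ℝ) ≤ max t δ := le_max_right _ _
  have hδs : (0 : ℝ) < max s δ := lt_of_lt_of_le hδ hs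
  have hδt : (0 : ℝ) < max t δ := lt_of_lt_of_le hδ ht
  have hmax : |max t δ - max s δ| ≤ |s - t| := by
    rw [abs_sub_comm]; simpa using abs_max_sub_max_le_abs s t (δ : ℝ)
  rw [Real.dist_eq, Real.dist_eq, inv_sub_inv hδs.ne' hδt.ne', abs_div,
    abs_of_pos (mul_pos hδs hδt), NNReal.coe_pow, NNReal.coe_inv, inv_pow, ← div_eq_inv_mul, sq]
  exact div_le_div₀ (abs_nonneg _) hmax (by positivity) (mul_le_mul hs ht δ.2 hδs.le)

theorem abs_add_inv_max_le {X : Type*} {u v : X → ℝ} {A δ : ℝ≥0} (hδ : 0 < δ)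
    (huA : ∀ x, |u x| ≤ A) (x : X) :
    |u x| + |((fun t : ℝ => (max t δ)⁻¹) ∘ (u + v)) x| ≤ (A + δ⁻¹ : ℝ≥0) := by
  have hmax : (δ : ℝ) ≤ max ((u + v) x) δ := le_max_right _ _
  have hδ' : (0 : ℝ) < δ := hδ
  rw [Function.comp_apply, abs_of_pos (inv_pos.2 (hδ'.trans_le hmax))]
  push_cast
  exact add_le_add (huA x) (inv_anti₀ hδ' hmax)

theorem div_add_eq_mul_inv_max {X : Type*} {u v : X → ℝ} {δ : ℝ}
    (hlow : ∀ x, u x ≠ 0 → δ ≤ u x + v x) :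
    (fun x => u x / (u x + v x)) = u * (fun t => (max t δ)⁻¹) ∘ (u + v) := by
  ext x
  by_cases hx : u x = 0
  · simp [hx]
  · simp [max_eq_left (hlow x hx), div_eq_mul_inv]

theorem le_mul_add_of_rpow_le {p a b x c : ℝ} (hp : 0 < p) (ha : 0 ≤ a) (hb : 0 ≤ b)
    (hx : 0 ≤ x) (hc : 0 ≤ c) (h : x ^ (1 / p) ≤ c * (a ^ (1 / p) + b ^ (1 / p))) :
    x ≤ (2 * c) ^ p * (a + b) := by
  have hab : a ^ (1 / p) + b ^ (1 / p) ≤ 2 * (a + b) ^ (1 / p) := by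
    have := Real.rpow_le_rpow ha (le_add_of_nonneg_right hb) (by positivity : 0 ≤ 1 / p)
    have := Real.rpow_le_rpow hb (le_add_of_nonneg_left ha) (by positivity : 0 ≤ 1 / p)
    linarith
  have hx' : x ^ p⁻¹ ≤ 2 * c * (a + b) ^ p⁻¹ := by
    rw [← one_div]; nlinarith
  rwa [Real.rpow_inv_le_iff_of_pos hx (by positivity) hp, Real.mul_rpow (by positivity)
    (by positivity), Real.rpow_inv_rpow (by positivity) hp.ne'] at hx'

structure IsLipschitzPEnergyForm {X : Type*} (p : ℝ) (F : Set (X → ℝ)) (E : (X → ℝ) → ℝ) :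
    Prop where
  add_mem : ∀ u ∈ F, ∀ v ∈ F, u + v ∈ F
  smul_mem : ∀ u ∈ F, ∀ c : ℝ, c • u ∈ F
  nonneg : ∀ u, 0 ≤ E u
  rpow_add_le : ∀ u ∈ F, ∀ v ∈ F, E (u + v) ^ (1 / p) ≤ E u ^ (1 / p) + E v ^ (1 / p)
  smul : ∀ u ∈ F, ∀ c : ℝ, E (c • u) = |c| ^ p * E u
  comp_lipschitz : ∀ u ∈ F, ∀ φ : ℝ → ℝ, LipschitzWith 1 φ → φ ∘ u ∈ F ∧ E (φ ∘ u) ≤ E u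

namespace IsLipschitzPEnergyForm

variable {X : Type*} {p : ℝ} {F : Set (X → ℝ)} {E : (X → ℝ) → ℝ} {u v : X → ℝ}

theorem neg_mem (hE : IsLipschitzPEnergyForm p F E) (hu : u ∈ F) : -u ∈ F := by
  simpa using hE.smul_mem u hu (-1)

theorem sub_mem (hE : IsLipschitzPEnergyForm p F E) (hu : u ∈ F) (hv : v ∈ F) : u - v ∈ F := by
  simpa [sub_eq_add_neg] using hE.add_mem u hu _ (hE.neg_mem hv)

theorem energy_neg (hE : IsLipschitzPEnergyForm p F E) (hu : u ∈ F) : E (-u) = E u := by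
  simpa using hE.smul u hu (-1)

theorem rpow_sub_le (hE : IsLipschitzPEnergyForm p F E) (hu : u ∈ F) (hv : v ∈ F) :
    E (u - v) ^ (1 / p) ≤ E u ^ (1 / p) + E v ^ (1 / p) := by
  simpa [sub_eq_add_neg, hE.energy_neg hv] using hE.rpow_add_le u hu _ (hE.neg_mem hv)

theorem rpow_smul (hE : IsLipschitzPEnergyForm p F E) (hp : p ≠ 0) (hu : u ∈ F) (c : ℝ) :
    E (c • u) ^ (1 / p) = |c| * E u ^ (1 / p) := by
  rw [hE.smul u hu, Real.mul_rpow (by positivity) (hE.nonneg u), one_div,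
    Real.rpow_rpow_inv (abs_nonneg c) hp]

theorem comp_mem (hE : IsLipschitzPEnergyForm p F E) (hu : u ∈ F) {K : ℝ≥0} {φ : ℝ → ℝ}
    (hφ : LipschitzWith K φ) : φ ∘ u ∈ F := by
  have hK : K + 1 ≠ 0 := by positivity
  rw [comp_eq_smul_comp hK]
  exact hE.smul_mem _
    (hE.comp_lipschitz u hu _ (lipschitzWith_one_inv_smul hK (hφ.weaken le_self_add))).1 _

theorem rpow_comp_le (hE : IsLipschitzPEnergyForm p F E) (hp : 0 < p) (hu : u ∈ F) {K : ℝ≥0}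
    {φ : ℝ → ℝ} (hφ : LipschitzWith K φ) : E (φ ∘ u) ^ (1 / p) ≤ K * E u ^ (1 / p) := by
  obtain rfl | hK := eq_or_ne K 0
  · -- a `0`-Lipschitz map is constant, so `φ ∘ u = φ ∘ 0` and `E (φ ∘ 0) ≤ E 0 = 0`
    have hconst : φ ∘ u = φ ∘ ((0 : ℝ) • u) :=
      funext fun x => by simpa using hφ.dist_le_mul (u x) 0
    have hle := (hE.comp_lipschitz _ (hE.smul_mem u hu 0) φ (hφ.weaken zero_le_one)).2
    rw [hE.smul u hu, abs_zero, Real.zero_rpow hp.ne', zero_mul] at hle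
    rw [hconst, le_antisymm hle (hE.nonneg _), Real.zero_rpow (by positivity)]
    simp
  · have hψ := hE.comp_lipschitz u hu _ (lipschitzWith_one_inv_smul hK hφ)
    rw [comp_eq_smul_comp hK, hE.rpow_smul hp.ne' hψ.1, NNReal.abs_eq]
    gcongr
    · exact hE.nonneg _
    · exact hψ.2

theorem mul_mem (hE : IsLipschitzPEnergyForm p F E) (hu : u ∈ F) (hv : v ∈ F) {K : ℝ≥0}
    (hK : ∀ x, |u x| + |v x| ≤ K) : u * v ∈ F := by
  rw [mul_eq_smul_sub_comp hK]
  exact hE.smul_mem _ (hE.sub_mem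
    (hE.comp_mem (hE.add_mem u hu v hv) (lipschitzWith_sq_min_abs _))
    (hE.comp_mem (hE.sub_mem hu hv) (lipschitzWith_sq_min_abs _))) _

theorem rpow_mul_le (hE : IsLipschitzPEnergyForm p F E) (hp : 0 < p) (hu : u ∈ F) (hv : v ∈ F)
    {K : ℝ≥0} (hK : ∀ x, |u x| + |v x| ≤ K) :
    E (u * v) ^ (1 / p) ≤ K * (E u ^ (1 / p) + E v ^ (1 / p)) := by
  have hq := lipschitzWith_sq_min_abs K
  have hplus := hE.comp_mem (hE.add_mem u hu v hv) hq
  have hminus := hE.comp_mem (hE.sub_mem hu hv) hq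
  have hq_plus := hE.rpow_comp_le hp (hE.add_mem u hu v hv) hq
  have hq_minus := hE.rpow_comp_le hp (hE.sub_mem hu hv) hq
  rw [NNReal.coe_mul, NNReal.coe_ofNat] at hq_plus hq_minus
  rw [mul_eq_smul_sub_comp hK, hE.rpow_smul hp.ne' (hE.sub_mem hplus hminus),
    abs_of_pos (by norm_num)]
  calc (4 : ℝ)⁻¹ * E (_ - _) ^ (1 / p)
      ≤ 4⁻¹ * (2 * K * E (u + v) ^ (1 / p) + 2 * K * E (u - v) ^ (1 / p)) := by
        gcongr
        linarith [hE.rpow_sub_le hplus hminus]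
    _ ≤ 4⁻¹ * (2 * K * (E u ^ (1 / p) + E v ^ (1 / p)) +
          2 * K * (E u ^ (1 / p) + E v ^ (1 / p))) := by
        gcongr
        · exact hE.rpow_add_le u hu v hv
        · exact hE.rpow_sub_le hu hv
    _ = K * (E u ^ (1 / p) + E v ^ (1 / p)) := by ring

theorem div_add_mem (hE : IsLipschitzPEnergyForm p F E) (hu : u ∈ F) (hv : v ∈ F) {A δ : ℝ≥0}
    (hδ : 0 < δ) (huA : ∀ x, |u x| ≤ A) (hlow : ∀ x, u x ≠ 0 → (δ : ℝ) ≤ u x + v x) :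
    (fun x => u x / (u x + v x)) ∈ F := by
  rw [div_add_eq_mul_inv_max hlow]
  exact hE.mul_mem hu (hE.comp_mem (hE.add_mem u hu v hv) (lipschitzWith_inv_max hδ))
    (abs_add_inv_max_le hδ huA)

theorem rpow_div_add_le (hE : IsLipschitzPEnergyForm p F E) (hp : 0 < p) (hu : u ∈ F)
    (hv : v ∈ F) {A δ : ℝ≥0} (hδ : 0 < δ) (huA : ∀ x, |u x| ≤ A)
    (hlow : ∀ x, u x ≠ 0 → (δ : ℝ) ≤ u x + v x) :
    E (fun x => u x / (u x + v x)) ^ (1 / p) ≤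
      (A + δ⁻¹) * (1 + δ⁻¹ ^ 2) * (E u ^ (1 / p) + E v ^ (1 / p)) := by
  have huv := hE.add_mem u hu v hv
  have hinv := lipschitzWith_inv_max hδ
  have hv_nonneg : 0 ≤ E v ^ (1 / p) := Real.rpow_nonneg (hE.nonneg v) _
  rw [div_add_eq_mul_inv_max hlow]
  calc _ ≤ ((A + δ⁻¹ : ℝ≥0) : ℝ) *
        (E u ^ (1 / p) + E ((fun t : ℝ => (max t δ)⁻¹) ∘ (u + v)) ^ (1 / p)) :=
        hE.rpow_mul_le hp hu (hE.comp_mem huv hinv) (abs_add_inv_max_le hδ huA)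
    _ ≤ (A + δ⁻¹) * (E u ^ (1 / p) + δ⁻¹ ^ 2 * (E u ^ (1 / p) + E v ^ (1 / p))) := by
        push_cast
        gcongr
        calc _ ≤ ((δ⁻¹ ^ 2 : ℝ≥0) : ℝ) * E (u + v) ^ (1 / p) := hE.rpow_comp_le hp huv hinv
          _ ≤ _ := by push_cast; gcongr; exact hE.rpow_add_le u hu v hv
    _ ≤ (A + δ⁻¹) * (1 + δ⁻¹ ^ 2) * (E u ^ (1 / p) + E v ^ (1 / p)) := by
        rw [mul_assoc]
        gcongr
        nlinarith

end IsLipschitzPEnergyForm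

theorem stmt4_general
    {X : Type*} (p : ℝ) (hp : 1 < p)
    (F : Set (X → ℝ)) (E : (X → ℝ) → ℝ)
    (hF_add : ∀ u ∈ F, ∀ v ∈ F, u + v ∈ F)
    (hF_smul : ∀ u ∈ F, ∀ c : ℝ, c • u ∈ F)
    (hE_nonneg : ∀ u, 0 ≤ E u)
    (hE_tri : ∀ u ∈ F, ∀ v ∈ F, E (u + v) ^ (1 / p) ≤ E u ^ (1 / p) + E v ^ (1 / p))
    (hE_smul : ∀ u ∈ F, ∀ c : ℝ, E (c • u) = |c| ^ p * E u)
    (hLip : ∀ u ∈ F, ∀ φ : ℝ → ℝ, LipschitzWith 1 φ → (φ ∘ u ∈ F ∧ E (φ ∘ u) ≤ E u))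
    (δ M : ℝ) (hδ : 0 < δ)
    (u : X → ℝ) (hu : u ∈ F) (v : X → ℝ) (hv : v ∈ F)
    (hu0 : ∀ x, 0 ≤ u x)
    (huM : ∀ x, u x ≤ M)
    (hlow : ∀ x, u x ≠ 0 → δ ≤ u x + v x) :
    ∃ C : ℝ, 0 < C ∧ (fun x => u x / (u x + v x)) ∈ F ∧
      E (fun x => u x / (u x + v x)) ≤ C * (E u + E v) := by
  have hE : IsLipschitzPEnergyForm p F E := ⟨hF_add, hF_smul, hE_nonneg, hE_tri, hE_smul, hLip⟩
  have hp0 : 0 < p := zero_lt_one.trans hp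
  let d : ℝ≥0 := ⟨δ, hδ.le⟩
  have hd : 0 < d := hδ
  have huA (x : X) : |u x| ≤ M.toNNReal :=
    (abs_of_nonneg (hu0 x)).trans_le ((huM x).trans M.le_coe_toNNReal)
  refine ⟨(2 * ((M.toNNReal + d⁻¹) * (1 + d⁻¹ ^ 2))) ^ p, by positivity,
    hE.div_add_mem hu hv hd huA hlow, ?_⟩
  exact le_mul_add_of_rpow_le hp0 (hE.nonneg u) (hE.nonneg v) (hE.nonneg _) (by positivity)
    (hE.rpow_div_add_le hp0 hu hv hd huA hlow)

theorem stmt4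
    {X : Type*} [MeasurableSpace X] (m : Measure X) (p : ℝ) (hp : 1 < p)
    (F : Set (X → ℝ)) (E : (X → ℝ) → ℝ)
    (hF_meas : ∀ u ∈ F, Measurable u)
    (hF_add : ∀ u ∈ F, ∀ v ∈ F, u + v ∈ F)
    (hF_smul : ∀ u ∈ F, ∀ c : ℝ, c • u ∈ F)
    (hE_nonneg : ∀ u, 0 ≤ E u)
    (hE_tri : ∀ u ∈ F, ∀ v ∈ F, E (u + v) ^ (1 / p) ≤ E u ^ (1 / p) + E v ^ (1 / p))
    (hE_smul : ∀ u ∈ F, ∀ c : ℝ, E (c • u) = |c| ^ p * E u)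
    (hLip : ∀ u ∈ F, ∀ φ : ℝ → ℝ, LipschitzWith 1 φ → (φ ∘ u ∈ F ∧ E (φ ∘ u) ≤ E u))
    (δ M : ℝ) (hδ : 0 < δ) (hM : 0 < M)
    (u : X → ℝ) (hu : u ∈ F) (v : X → ℝ) (hv : v ∈ F)
    (hu0 : ∀ x, 0 ≤ u x) (hv0 : ∀ x, 0 ≤ v x)
    (huM : ∀ x, u x ≤ M)
    (hlow : ∀ x, u x ≠ 0 → δ ≤ u x + v x) :
    ∃ C : ℝ, 0 < C ∧ (fun x => u x / (u x + v x)) ∈ F ∧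
      E (fun x => u x / (u x + v x)) ≤ C * (E u + E v) :=
  stmt4_general p hp F E hF_add hF_smul hE_nonneg hE_tri hE_smul hLip δ M hδ u hu v hv hu0 huM hlow
end

section
/- Let U ⊂ X be an A-uniform domain for some A ≥ 1 in a metric space (X,d). Then the corkscrew condition holds: for any x ∈ closure(U) and r > 0 with U \ B(x,r) ≠ ∅, there exists y ∈ U such that B(y, r/(3A)) ⊂ B(x,r) ∩ U. -/
open MeasureTheory Metric Set

/-- `U` is an `A`-uniform domain: a connected, non-empty, proper open subset such that any
two points of `U` are joined by an `A`-uniform curve in `U`. -/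
def IsUniformDomain {X : Type*} [MetricSpace X] (A : ℝ) (U : Set X) : Prop :=
  IsOpen U ∧ IsConnected U ∧ U ≠ Set.univ ∧
  ∀ x ∈ U, ∀ y ∈ U, ∃ γ : ℝ → X, ContinuousOn γ (Set.Icc 0 1) ∧
    γ 0 = x ∧ γ 1 = y ∧ γ '' Set.Icc 0 1 ⊆ U ∧
    Metric.diam (γ '' Set.Icc 0 1) ≤ A * dist x y ∧
    ∀ t ∈ Set.Icc (0 : ℝ) 1,
      A⁻¹ * min (dist x (γ t)) (dist y (γ t)) ≤ Metric.infDist (γ t) Uᶜ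

theorem stmt9
    {X : Type*} [MetricSpace X]
    (A : ℝ) (hA : 1 ≤ A) (U : Set X) (hU : IsUniformDomain A U) :
    ∀ x ∈ closure U, ∀ r : ℝ, 0 < r → (U \ ball x r).Nonempty →
      ∃ y ∈ U, ball y (r / (3 * A)) ⊆ ball x r ∩ U := by
  obtain ⟨hOpen, hConn, hNe, hCurve⟩ := hU
  rintro x hx r hr ⟨z, hzU, hzB⟩
  have hA0 : (0 : ℝ) < A := by linarith
  obtain ⟨x', hx'U, hdx'⟩ : ∃ x' ∈ U, dist x x' < r / 12 :=
    Metric.mem_closure_iff.mp hx (r / 12) (by linarith)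
  obtain ⟨γ, hγc, hγ0, hγ1, hγU, -, hδ⟩ := hCurve x' hx'U z hzU
  have hf : ContinuousOn (fun t => dist x (γ t)) (Icc 0 1) :=
    ((continuous_const.dist continuous_id).comp_continuousOn hγc : )
  have hz : r ≤ dist x z := by
    have := hzB
    simp only [mem_ball, not_lt] at this
    rwa [dist_comm] at this
  have hmem : r / 2 ∈ Icc (dist x (γ 0)) (dist x (γ 1)) := by
    rw [hγ0, hγ1]
    constructor <;> linarith
  obtain ⟨t, ht, hty⟩ := intermediate_value_Icc (by norm_num : (0:ℝ) ≤ 1) hf hmem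
  set y := γ t with hy
  have hyU : y ∈ U := hγU ⟨t, ht, rfl⟩
  have hxy : dist x y = r / 2 := hty
  have hx'y : r / 3 ≤ dist x' y := by
    have h1 : dist x y ≤ dist x x' + dist x' y := dist_triangle x x' y
    linarith
  have hzy : r / 3 ≤ dist z y := by
    have h1 : dist x z ≤ dist x y + dist y z := dist_triangle x y z
    have : dist z y = dist y z := dist_comm z y
    linarith
  have hinf : r / (3 * A) ≤ Metric.infDist y Uᶜ := by
    have h1 := hδ t ht
    have h2 : r / 3 ≤ min (dist x' (γ t)) (dist z (γ t)) := le_min hx'y hzy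
    have h3 : A⁻¹ * (r / 3) ≤ A⁻¹ * min (dist x' (γ t)) (dist z (γ t)) :=
      mul_le_mul_of_nonneg_left h2 (by positivity)
    have h4 : A⁻¹ * (r / 3) = r / (3 * A) := by rw [inv_mul_eq_div, div_div]
    rw [h4] at h3
    exact h3.trans h1
  have hrA : r / (3 * A) ≤ r / 3 :=
    div_le_div_of_nonneg_left hr.le (by norm_num) (by linarith)
  refine ⟨y, hyU, fun w hw => ⟨?_, ?_⟩⟩
  · rw [mem_ball] at hw ⊢
    have h1 : dist w x ≤ dist w y + dist y x := dist_triangle w y x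
    have h2 : dist y x = r / 2 := by rw [dist_comm]; exact hxy
    linarith
  · by_contra hwU
    have : Metric.infDist y Uᶜ ≤ dist y w := Metric.infDist_le_dist_of_mem hwU
    rw [mem_ball, dist_comm] at hw
    linarith
end

section
/- Let ε ∈ (0,1/2), U ⊊ X a non-empty open set, and 𝔑 = {B_U(x_i,r_i)}_{i∈I} an ε-Whitney cover of U. For any λ > 1 with (λ-1)ε < 1 and any i,j ∈ I such that B_U(x_i,λr_i) ∩ B_U(x_j,λr_j) ≠ ∅, the radii satisfy ((1-(λ-1)ε)/(1+(λ+1)ε)) r_j ≤ r_i ≤ ((1+(λ+1)ε)/(1-(λ-1)ε)) r_j. -/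
open MeasureTheory Metric Set

theorem stmt11
    {X : Type*} [MetricSpace X]
    (ε : ℝ) (hε0 : 0 < ε) (hε : ε < 1 / 2)
    (U : Set X) (hUo : IsOpen U) (hUne : U.Nonempty) (hUproper : U ≠ Set.univ)
    {ι : Type*} (x : ι → X) (r : ι → ℝ)
    (hx : ∀ i, x i ∈ U)
    (hr : ∀ i, r i = (ε / (1 + ε)) * Metric.infDist (x i) Uᶜ)
    (hdisj : Pairwise (Function.onFun Disjoint (fun i => ball (x i) (r i) ∩ U)))
    (hcover : (⋃ i, ball (x i) (2 * (1 + ε) * r i) ∩ U) = U)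
    (lam : ℝ) (hlam : 1 < lam) (hlamε : (lam - 1) * ε < 1)
    (i j : ι)
    (hij : (ball (x i) (lam * r i) ∩ U ∩ (ball (x j) (lam * r j) ∩ U)).Nonempty) :
    ((1 - (lam - 1) * ε) / (1 + (lam + 1) * ε)) * r j ≤ r i ∧
      r i ≤ ((1 + (lam + 1) * ε) / (1 - (lam - 1) * ε)) * r j := by
  obtain ⟨y, ⟨⟨hyi, -⟩, hyj, -⟩⟩ := hij
  have h1ε : (0:ℝ) < 1 + ε := by linarith
  have hδi : ε * Metric.infDist (x i) Uᶜ = (1 + ε) * r i := by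
    rw [hr i]; field_simp
  have hδj : ε * Metric.infDist (x j) Uᶜ = (1 + ε) * r j := by
    rw [hr j]; field_simp
  have hδi0 : 0 ≤ Metric.infDist (x i) Uᶜ := Metric.infDist_nonneg
  have hδj0 : 0 ≤ Metric.infDist (x j) Uᶜ := Metric.infDist_nonneg
  have hri0 : 0 ≤ r i := by rw [hr i]; positivity
  have hrj0 : 0 ≤ r j := by rw [hr j]; positivity
  have hd : dist (x i) (x j) ≤ lam * r i + lam * r j := by
    calc dist (x i) (x j) ≤ dist (x i) y + dist y (x j) := dist_triangle _ _ _
    _ ≤ lam * r i + lam * r j := by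
        rw [mem_ball] at hyi hyj
        rw [dist_comm (x i) y]
        exact add_le_add hyi.le hyj.le
  have kj : Metric.infDist (x j) Uᶜ ≤ Metric.infDist (x i) Uᶜ + lam * r i + lam * r j := by
    have := Metric.infDist_le_infDist_add_dist (x := x j) (y := x i) (s := Uᶜ)
    rw [dist_comm] at this
    linarith
  have ki : Metric.infDist (x i) Uᶜ ≤ Metric.infDist (x j) Uᶜ + lam * r i + lam * r j := by
    have := Metric.infDist_le_infDist_add_dist (x := x i) (y := x j) (s := Uᶜ)
    linarith
  have kj' := mul_le_mul_of_nonneg_left kj hε0.le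
  have ki' := mul_le_mul_of_nonneg_left ki hε0.le
  have keyj : r j * (1 - (lam - 1) * ε) ≤ r i * (1 + (lam + 1) * ε) := by nlinarith
  have keyi : r i * (1 - (lam - 1) * ε) ≤ r j * (1 + (lam + 1) * ε) := by nlinarith
  have hp1 : (0:ℝ) < 1 + (lam + 1) * ε := by nlinarith
  have hp2 : (0:ℝ) < 1 - (lam - 1) * ε := by linarith
  constructor
  · rw [div_mul_eq_mul_div, div_le_iff₀ hp1]
    linarith
  · rw [div_mul_eq_mul_div, le_div_iff₀ hp2]
    linarith
end

section
/- Let (X,d) be a doubling metric space (every ball of radius r can be covered by N_D balls of radius r/2), ε ∈ (0,1/2), and 𝔑 = {B_U(x_i,r_i)}_{i∈I} an ε-Whitney cover of a non-empty open U ⊊ X. Then there exists C = C(N_D, ε) such that ∑_{i∈I} 1_{B_U(x_i, r_i/ε)} ≤ C pointwise on X (bounded overlap of dilated Whitney balls). -/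
open MeasureTheory Metric Set
open scoped ENNReal

lemma sep_bound {X : Type*} [MetricSpace X] (ND : ℕ)
    (hdoub : ∀ (x : X) (R : ℝ), ∃ s : Finset X, s.card ≤ ND ∧
      ball x R ⊆ ⋃ y ∈ s, ball y (R / 2)) :
    ∀ (k : ℕ) (z : X) (R ρ : ℝ), R / 2 ^ k < ρ / 2 →
    ∀ t : Finset X, (∀ p ∈ t, p ∈ ball z R) →
      ((t : Set X).Pairwise (fun p q => ρ ≤ dist p q)) → t.card ≤ ND ^ k := by
  classical
  intro k
  induction k with
  | zero =>
    intro z R ρ hR t ht hsep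
    simp only [pow_zero] at *
    refine Finset.card_le_one.mpr (fun p hp q hq => ?_)
    by_contra hne
    have h1 := ht p hp
    have h2 := ht q hq
    rw [mem_ball] at h1 h2
    have hsepq : ρ ≤ dist p q := hsep (Finset.mem_coe.mpr hp) (Finset.mem_coe.mpr hq) hne
    have htri := dist_triangle p z q
    have h2' : dist z q < R := by rw [dist_comm]; exact h2
    simp only [div_one] at hR
    linarith
  | succ k ih =>
    intro z R ρ hR t ht hsep
    obtain ⟨s, hsc, hscov⟩ := hdoub z R
    have hsub : t ⊆ s.biUnion (fun y => t.filter (fun p => p ∈ ball y (R / 2))) := by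
      intro p hp
      have := hscov (ht p hp)
      simp only [Set.mem_iUnion] at this
      obtain ⟨y, hy, hpy⟩ := this
      exact Finset.mem_biUnion.mpr ⟨y, hy, Finset.mem_filter.mpr ⟨hp, hpy⟩⟩
    calc t.card ≤ (s.biUnion (fun y => t.filter (fun p => p ∈ ball y (R / 2)))).card :=
          Finset.card_le_card hsub
      _ ≤ ∑ y ∈ s, (t.filter (fun p => p ∈ ball y (R / 2))).card :=
          Finset.card_biUnion_le
      _ ≤ ∑ _y ∈ s, ND ^ k := by
          refine Finset.sum_le_sum (fun y _ => ?_)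
          refine ih y (R / 2) ρ ?_ _ (fun p hp => (Finset.mem_filter.mp hp).2) ?_
          · rw [div_div]
            rw [div_lt_iff₀ (by positivity)] at hR ⊢
            rw [pow_succ] at hR
            linarith
          · exact hsep.mono (fun p hp => Finset.mem_coe.mpr (Finset.mem_filter.mp hp).1)
      _ = s.card * ND ^ k := by rw [Finset.sum_const, smul_eq_mul]
      _ ≤ ND * ND ^ k := Nat.mul_le_mul_right _ hsc
      _ = ND ^ (k + 1) := by ring

theorem stmt12
    {X : Type*} [MetricSpace X]
    (ND : ℕ)
    (hdoub : ∀ (x : X) (R : ℝ), ∃ s : Finset X, s.card ≤ ND ∧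
      ball x R ⊆ ⋃ y ∈ s, ball y (R / 2))
    (ε : ℝ) (hε0 : 0 < ε) (hε : ε < 1 / 2)
    (U : Set X) (hUo : IsOpen U) (hUne : U.Nonempty) (hUproper : U ≠ Set.univ)
    {ι : Type*} (x : ι → X) (r : ι → ℝ)
    (hx : ∀ i, x i ∈ U)
    (hr : ∀ i, r i = (ε / (1 + ε)) * Metric.infDist (x i) Uᶜ)
    (hdisj : Pairwise (Function.onFun Disjoint (fun i => ball (x i) (r i) ∩ U)))
    (hcover : (⋃ i, ball (x i) (2 * (1 + ε) * r i) ∩ U) = U) :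
    ∃ C : ℕ, ∀ z : X,
      (∑' i, Set.indicator (ball (x i) (r i / ε) ∩ U) (fun _ => (1 : ℝ≥0∞)) z) ≤ C := by
  classical
  have hUc : Uᶜ.Nonempty := Set.nonempty_compl.mpr hUproper
  have hUcc : IsClosed Uᶜ := hUo.isClosed_compl
  have hδi : ∀ i, 0 < infDist (x i) Uᶜ := by
    intro i
    exact (hUcc.notMem_iff_infDist_pos hUc).mp (by simpa using hx i)
  have hrpos : ∀ i, 0 < r i := by
    intro i
    rw [hr i]
    exact mul_pos (div_pos hε0 (by linarith)) (hδi i)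
  -- key algebraic identity
  have hri : ∀ i, r i * (1 + ε) = ε * infDist (x i) Uᶜ := by
    intro i
    rw [hr i]
    field_simp
  -- separation of centers
  have hsepc : ∀ i j, i ≠ j → min (r i) (r j) ≤ dist (x i) (x j) := by
    intro i j hij
    by_contra h
    push_neg at h
    have h1 : dist (x i) (x j) < r i := lt_of_lt_of_le h (min_le_left _ _)
    have h2 : dist (x i) (x j) < r j := lt_of_lt_of_le h (min_le_right _ _)
    have m1 : x j ∈ ball (x i) (r i) ∩ U := ⟨by rwa [mem_ball, dist_comm], hx j⟩
    have m2 : x j ∈ ball (x j) (r j) ∩ U := ⟨mem_ball_self (hrpos j), hx j⟩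
    exact Set.disjoint_left.mp (hdisj hij) m1 m2
  -- choose k
  obtain ⟨k, hk⟩ := pow_unbounded_of_one_lt (2 * (2 + ε) / ε ^ 2) (by norm_num : (1:ℝ) < 2)
  refine ⟨ND ^ k, fun z => ?_⟩
  rw [ENNReal.tsum_eq_iSup_sum]
  refine iSup_le (fun t => ?_)
  simp only [Set.indicator_apply]
  rw [Finset.sum_boole]
  set t' := t.filter (fun i => z ∈ ball (x i) (r i / ε) ∩ U) with ht'
  suffices h : t'.card ≤ ND ^ k by exact_mod_cast h
  rcases t'.eq_empty_or_nonempty with h0 | ⟨i₀, hi₀⟩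
  · simp [h0]
  · have hzU : z ∈ U := (Finset.mem_filter.mp hi₀).2.2
    set δ := infDist z Uᶜ with hδdef
    have hδ : 0 < δ := (hUcc.notMem_iff_infDist_pos hUc).mp (by simpa using hzU)
    -- facts for each i ∈ t'
    have hfacts : ∀ i ∈ t', dist z (x i) < δ / ε ∧ ε * δ / (2 + ε) ≤ r i := by
      intro i hi
      have hzb : z ∈ ball (x i) (r i / ε) := (Finset.mem_filter.mp hi).2.1
      rw [mem_ball] at hzb
      have hd : dist z (x i) * ε < r i := (lt_div_iff₀ hε0).mp hzb
      have lip1 : infDist (x i) Uᶜ ≤ δ + dist z (x i) := by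
        have := Metric.infDist_le_infDist_add_dist (x := x i) (y := z) (s := Uᶜ)
        rwa [dist_comm] at this
      have lip2 : δ ≤ infDist (x i) Uᶜ + dist z (x i) :=
        Metric.infDist_le_infDist_add_dist
      have hriε := hri i
      have hδipos := hδi i
      have hdpos := dist_nonneg (x := z) (y := x i)
      constructor
      · rw [lt_div_iff₀ hε0]
        nlinarith
      · rw [div_le_iff₀ (by linarith)]
        nlinarith
    -- the image finset
    have hinj : Set.InjOn x ↑t' := by
      intro i hi j hj hxy
      by_contra hij
      have m1 : x i ∈ ball (x i) (r i) ∩ U := ⟨mem_ball_self (hrpos i), hx i⟩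
      have m2 : x i ∈ ball (x j) (r j) ∩ U := by
        rw [hxy]; exact ⟨mem_ball_self (hrpos j), hx j⟩
      exact Set.disjoint_left.mp (hdisj hij) m1 m2
    rw [← Finset.card_image_of_injOn hinj]
    refine sep_bound ND hdoub k z (δ / ε) (ε * δ / (2 + ε)) ?_ _ ?_ ?_
    · -- radius inequality from hk
      rw [div_div, div_div, div_lt_div_iff₀ (by positivity) (by positivity)]
      rw [div_lt_iff₀ (by positivity)] at hk
      nlinarith [mul_lt_mul_of_pos_left hk hδ]
    · intro p hp
      obtain ⟨i, hi, rfl⟩ := Finset.mem_image.mp hp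
      rw [mem_ball, dist_comm]
      exact (hfacts i hi).1
    · intro p hp q hq hpq
      obtain ⟨i, hi, rfl⟩ := Finset.mem_image.mp (Finset.mem_coe.mp hp)
      obtain ⟨j, hj, rfl⟩ := Finset.mem_image.mp (Finset.mem_coe.mp hq)
      have hij : i ≠ j := fun h => hpq (by rw [h])
      have := hsepc i j hij
      have h1 := (hfacts i hi).2
      have h2 := (hfacts j hj).2
      exact le_trans (le_min h1 h2) this
end

section
/- Define, for ε > 0, the ε-chain distance d_ε(x,y) as the infimum of ∑_{i=0}^{N-1} d(x_i, x_{i+1}) over chains x_0 = x, x_N = y with d(x_i, x_{i+1}) < ε for all i (infimum over the empty set is ∞). If d_ε(x,y) < ∞ for all x,y ∈ X and all ε > 0, then (X,d) is uniformly perfect: there exists σ ∈ (0,1) such that B(x,r) \ B(x,σr) ≠ ∅ whenever B(x,r) ≠ X. -/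
open Metric Set

theorem stmt13
    {X : Type*} [MetricSpace X] [Nontrivial X]
    (hchain : ∀ ε : ℝ, 0 < ε → ∀ x y : X, ∃ (N : ℕ) (z : ℕ → X),
      z 0 = x ∧ z N = y ∧ ∀ i < N, dist (z i) (z (i + 1)) < ε) :
    ∃ σ : ℝ, 0 < σ ∧ σ < 1 ∧ ∀ (x : X) (r : ℝ), 0 < r → ball x r ≠ Set.univ →
      (ball x r \ ball x (σ * r)).Nonempty := by
  refine ⟨1/2, by norm_num, by norm_num, fun x r hr hne => ?_⟩
  by_contra h
  rw [not_nonempty_iff_eq_empty, diff_eq_empty] at h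
  obtain ⟨y, hy⟩ : ∃ y, y ∉ ball x r := by
    by_contra hy; push_neg at hy
    exact hne (eq_univ_of_forall hy)
  obtain ⟨N, z, hz0, hzN, hstep⟩ := hchain (r/2) (by linarith) x y
  have key : ∀ i ≤ N, z i ∈ ball x (1/2 * r) := by
    intro i hi
    induction i with
    | zero =>
      rw [hz0, mem_ball, dist_self]; linarith
    | succ n ih =>
      have hn : n ≤ N := Nat.le_of_succ_le hi
      have h1 := ih hn
      have h2 := hstep n (Nat.lt_of_succ_le hi)
      apply h
      rw [mem_ball] at h1 ⊢
      calc dist (z (n+1)) x ≤ dist (z (n+1)) (z n) + dist (z n) x := dist_triangle _ _ _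
        _ < r/2 + 1/2*r := by rw [dist_comm (z (n+1))]; linarith
        _ = r := by ring
  have hN := key N le_rfl
  rw [hzN] at hN
  exact hy (ball_subset_ball (by linarith) hN)
end
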